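/- (Positivity of the covariance matrix / Kalman condition) Assume B has the block form of (H2), including the rank conditions rank(B_k) = m_k for k = 1,…,d. Let J be the N×N matrix whose top-left m₀×m₀ block is the identity I_{m₀} and whose other entries are zero, and for t ∈ ℝ set C(t) = ∫₀^t E(s)·J·E(s)ᵀ ds, where E(s) = exp(−sBᵀ). Then for every t > 0, the symmetric matrix C(t) is positive definite (in particular, C(t) is invertible). -/

import Mathlib

open MeasureTheory
open scoped ENNReal

noncomputable section

namespace UP

/-- A point of `ℝ^{N+1}`, written `z = (t, x)` with `t ∈ ℝ`, `x ∈ ℝ^N`. -/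
abbrev Pt (N : ℕ) : Type := ℝ × (Fin N → ℝ)

variable {N : ℕ}

/-- `E(τ) = exp(−τ Bᵀ)` (matrix exponential). -/
def Emat (B : Matrix (Fin N) (Fin N) ℝ) (τ : ℝ) : Matrix (Fin N) (Fin N) ℝ :=
  NormedSpace.exp ((-τ) • B.transpose)

/-- The group operation `(t,x)∘(τ,y) = (t+τ, y+E(τ)x)`. -/
def op (B : Matrix (Fin N) (Fin N) ℝ) (z w : Pt N) : Pt N :=
  (z.1 + w.1, w.2 + (Emat B w.1).mulVec z.2)

/-- The group inverse `(t,x)^{-1} = (−t, −E(−t)x)`. -/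
def inv (B : Matrix (Fin N) (Fin N) ℝ) (z : Pt N) : Pt N :=
  (-z.1, -((Emat B (-z.1)).mulVec z.2))

/-- Partial sums of the block sizes: `off m k = m₀ + ⋯ + m_{k-1}`. -/
def off (m : ℕ → ℕ) (k : ℕ) : ℕ := ∑ l ∈ Finset.range k, m l

/-- Index of the block containing the coordinate `i` (blocks of sizes `m 0, m 1, …`). -/
def blockOf (m : ℕ → ℕ) (i : ℕ) : ℕ := sInf {k : ℕ | i < off m (k + 1)}

/-- The exponent `α_i = 2·(block index of i) + 1`. -/
def alphaExp (m : ℕ → ℕ) (i : ℕ) : ℕ := 2 * blockOf m i + 1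

/-- `Q = m₀ + 3m₁ + ⋯ + (2d+1)m_d`; `Q+2` is the homogeneous dimension. -/
def Qhom (d : ℕ) (m : ℕ → ℕ) : ℕ := ∑ k ∈ Finset.range (d + 1), (2 * k + 1) * m k

/-- Extension of a matrix on `Fin N` to `ℕ`-indices (by zero). -/
def Bext (B : Matrix (Fin N) (Fin N) ℝ) (i j : ℕ) : ℝ :=
  if h : i < N ∧ j < N then B ⟨i, h.1⟩ ⟨j, h.2⟩ else 0

/-- The superdiagonal block `B_k` (of size `m_{k-1} × m_k`), rows in block `k-1`,
columns in block `k`. -/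
def superBlock (B : Matrix (Fin N) (Fin N) ℝ) (m : ℕ → ℕ) (k : ℕ) :
    Matrix (Fin (m (k - 1))) (Fin (m k)) ℝ :=
  Matrix.of fun a b => Bext B (off m (k - 1) + (a : ℕ)) (off m k + (b : ℕ))

/-- The block form of hypothesis (H2), without the rank conditions: the block sizes
`m 0 ≥ m 1 ≥ ⋯ ≥ m d ≥ 1` sum to `N`, and the only (possibly) nonzero blocks of `B`
are the superdiagonal ones. -/
def IsBlockForm (d : ℕ) (m : ℕ → ℕ) (B : Matrix (Fin N) (Fin N) ℝ) : Prop :=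
  (∀ k, k ≤ d → 1 ≤ m k) ∧ (∀ k, k < d → m (k + 1) ≤ m k) ∧
  (∑ k ∈ Finset.range (d + 1), m k = N) ∧
  (∀ i j : Fin N, blockOf m (j : ℕ) ≠ blockOf m (i : ℕ) + 1 → B i j = 0)

/-- Hypothesis (H2): block form, and each superdiagonal block `B_k` has full rank `m_k`. -/
def IsH2 (d : ℕ) (m : ℕ → ℕ) (B : Matrix (Fin N) (Fin N) ℝ) : Prop :=
  IsBlockForm d m B ∧ ∀ k, 1 ≤ k → k ≤ d → (superBlock B m k).rank = m k

/-- Operator norm of the linear map `x ↦ Bx` on `ℝ^N`. -/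
def matNorm (B : Matrix (Fin N) (Fin N) ℝ) : ℝ :=
  ‖LinearMap.toContinuousLinearMap B.mulVecLin‖

/-- Hypothesis (H1) on the coefficients `a_{ij}`, `i,j < m₀`: symmetry, measurability,
boundedness and uniform ellipticity with constant `λ`. -/
def IsH1 (lam : ℝ) (m0 : ℕ) (a : ℕ → ℕ → Pt N → ℝ) : Prop :=
  0 < lam ∧
  (∀ i j, i < m0 → j < m0 → a i j = a j i) ∧
  (∀ i j, i < m0 → j < m0 → Measurable (a i j)) ∧
  (∀ i j, i < m0 → j < m0 → ∃ M : ℝ, ∀ z : Pt N, |a i j z| ≤ M) ∧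
  (∀ z : Pt N, ∀ ξ : ℕ → ℝ,
    (1 / lam) * ∑ i ∈ Finset.range m0, (ξ i) ^ 2 ≤
      ∑ i ∈ Finset.range m0, ∑ j ∈ Finset.range m0, a i j z * ξ i * ξ j) ∧
  (∀ z : Pt N, ∀ ξ : ℕ → ℝ,
    ∑ i ∈ Finset.range m0, ∑ j ∈ Finset.range m0, a i j z * ξ i * ξ j ≤
      lam * ∑ i ∈ Finset.range m0, (ξ i) ^ 2)

/-- The defining function of the homogeneous norm:
`normEq m z r = Σ_i x_i²/r^{2α_i} + t²/r⁴`. -/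
def normEq (m : ℕ → ℕ) (z : Pt N) (r : ℝ) : ℝ :=
  (∑ i : Fin N, (z.2 i) ^ 2 / r ^ (2 * alphaExp m (i : ℕ))) + z.1 ^ 2 / r ^ 4

open Classical in
/-- The homogeneous norm `‖z‖`: `0` at the origin, and otherwise the (unique) positive
root `r` of `normEq m z r = 1`. -/
def hnorm (m : ℕ → ℕ) (z : Pt N) : ℝ :=
  if z = (0 : Pt N) then 0 else sInf {r : ℝ | 0 < r ∧ normEq m z r = 1}

/-- The ball `B_r(z₀) = {z : ‖z^{-1}∘z₀‖ ≤ r}`. -/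
def ball (B : Matrix (Fin N) (Fin N) ℝ) (m : ℕ → ℕ) (r : ℝ) (z₀ : Pt N) : Set (Pt N) :=
  {z | hnorm m (op B (inv B z) z₀) ≤ r}

/-- The past ball `B⁻_r(z₀) = B_r(z₀) ∩ {t < t₀}`. -/
def ballNeg (B : Matrix (Fin N) (Fin N) ℝ) (m : ℕ → ℕ) (r : ℝ) (z₀ : Pt N) : Set (Pt N) :=
  ball B m r z₀ ∩ {z : Pt N | z.1 < z₀.1}

/-- The dilation `δ_l(t,x) = (l²t, l^{α₁}x₁, …, l^{α_N}x_N)`. -/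
def dil (m : ℕ → ℕ) (l : ℝ) (z : Pt N) : Pt N :=
  (l ^ 2 * z.1, fun i => l ^ alphaExp m (i : ℕ) * z.2 i)

/-- The coordinate direction `e_{x_i}` in `ℝ^{N+1}` (zero if `i ≥ N`). -/
def ex (N : ℕ) (i : ℕ) : Pt N := (0, fun j => if (j : ℕ) = i then 1 else 0)

/-- The time direction `e_t` in `ℝ^{N+1}`. -/
def et (N : ℕ) : Pt N := (1, 0)

/-- Test functions: smooth, compactly supported in `Ω`. -/
def IsTest (Ω : Set (Pt N)) (φ : Pt N → ℝ) : Prop :=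
  ContDiff ℝ (⊤ : ℕ∞) φ ∧ HasCompactSupport φ ∧ tsupport φ ⊆ Ω

/-- `f ∈ L²_loc(Ω)`. -/
def MemL2loc (Ω : Set (Pt N)) (f : Pt N → ℝ) : Prop :=
  ∀ K : Set (Pt N), K ⊆ Ω → IsCompact K → IntegrableOn (fun z => (f z) ^ 2) K

/-- The common part of the definition of weak (sub)solutions: `u ∈ L²_loc(Ω)` with weak
derivatives `g i = ∂_{x_i}u ∈ L²_loc` for `i < m₀` and `h = Yu ∈ L²_loc`, where
`Y = Σ b_{ij}x_i∂_{x_j} − ∂_t`. -/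
def WeakData (m0 : ℕ) (B : Matrix (Fin N) (Fin N) ℝ) (Ω : Set (Pt N))
    (u : Pt N → ℝ) (g : ℕ → Pt N → ℝ) (h : Pt N → ℝ) : Prop :=
  MemL2loc Ω u ∧ (∀ i, i < m0 → MemL2loc Ω (g i)) ∧ MemL2loc Ω h ∧
  (∀ i, i < m0 → ∀ φ : Pt N → ℝ, IsTest Ω φ →
    ∫ z in Ω, u z * fderiv ℝ φ z (ex N i) = -∫ z in Ω, g i z * φ z) ∧
  (∀ φ : Pt N → ℝ, IsTest Ω φ →
    ∫ z in Ω, u z * (fderiv ℝ φ z (et N)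
        - ∑ i : Fin N, ∑ j : Fin N, B i j * z.2 i * fderiv ℝ φ z (ex N (j : ℕ)))
      = ∫ z in Ω, h z * φ z)

/-- `u` is a weak sub-solution of `Lu = 0` in `Ω`. -/
def IsWeakSubSolution (m0 : ℕ) (a : ℕ → ℕ → Pt N → ℝ) (B : Matrix (Fin N) (Fin N) ℝ)
    (Ω : Set (Pt N)) (u : Pt N → ℝ) : Prop :=
  ∃ g : ℕ → Pt N → ℝ, ∃ h : Pt N → ℝ, WeakData m0 B Ω u g h ∧
    ∀ φ : Pt N → ℝ, IsTest Ω φ → (∀ z, 0 ≤ φ z) →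
      0 ≤ ∫ z in Ω, (φ z * h z
        - ∑ i ∈ Finset.range m0, ∑ j ∈ Finset.range m0,
            g i z * a i j z * fderiv ℝ φ z (ex N j))

/-- `u` is a weak solution of `Lu = 0` in `Ω`. -/
def IsWeakSolution (m0 : ℕ) (a : ℕ → ℕ → Pt N → ℝ) (B : Matrix (Fin N) (Fin N) ℝ)
    (Ω : Set (Pt N)) (u : Pt N → ℝ) : Prop :=
  ∃ g : ℕ → Pt N → ℝ, ∃ h : Pt N → ℝ, WeakData m0 B Ω u g h ∧
    ∀ φ : Pt N → ℝ, IsTest Ω φ →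
      (∫ z in Ω, (φ z * h z
        - ∑ i ∈ Finset.range m0, ∑ j ∈ Finset.range m0,
            g i z * a i j z * fderiv ℝ φ z (ex N j))) = 0

/-- The slice cylinder `K_ρ × S_ρ ⊆ ℝ^N`:
`|x′| ≤ ρ` (Euclidean norm of the first `m₀` coordinates) and `|x_i| ≤ λN²ρ^{α_i}`
for `i ≥ m₀`. -/
def KSset (N : ℕ) (lam : ℝ) (m0 : ℕ) (m : ℕ → ℕ) (ρ : ℝ) : Set (Fin N → ℝ) :=
  {x | (∑ i ∈ Finset.univ.filter (fun i : Fin N => (i : ℕ) < m0), (x i) ^ 2) ≤ ρ ^ 2 ∧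
       ∀ i : Fin N, m0 ≤ (i : ℕ) → |x i| ≤ lam * (N : ℝ) ^ 2 * ρ ^ alphaExp m (i : ℕ)}

/-- The cube `C_ρ(0,0) = {(t,x) : |t| ≤ ρ², |x_i| ≤ ρ^{α_i}}`. -/
def cube (m : ℕ → ℕ) (ρ : ℝ) : Set (Pt N) :=
  {z | |z.1| ≤ ρ ^ 2 ∧ ∀ i : Fin N, |z.2 i| ≤ ρ ^ alphaExp m (i : ℕ)}

/-- The constant-coefficient operator
`L₀u = Σ_{i,j<m₀} a⁰_{ij}∂²_{x_ix_j}u + Σ_{i,j} b_{ij}x_i∂_{x_j}u − ∂_t u`. -/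
def L0 (m0 : ℕ) (A : ℕ → ℕ → ℝ) (B : Matrix (Fin N) (Fin N) ℝ)
    (u : Pt N → ℝ) (z : Pt N) : ℝ :=
  (∑ i ∈ Finset.range m0, ∑ j ∈ Finset.range m0,
      A i j * fderiv ℝ (fun w => fderiv ℝ u w (ex N j)) z (ex N i))
  + (∑ i : Fin N, ∑ j : Fin N, B i j * z.2 i * fderiv ℝ u z (ex N (j : ℕ)))
  - fderiv ℝ u z (et N)

/-- The matrix `J`: identity on the first `m₀` coordinates, zero elsewhere. -/
def Jmat (N m0 : ℕ) : Matrix (Fin N) (Fin N) ℝ :=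
  Matrix.of fun i j => if (i : ℕ) < m0 ∧ i = j then 1 else 0

/-- The covariance matrix `C(t) = ∫₀ᵗ E(s)·J·E(s)ᵀ ds` (entrywise integral). -/
def Cmat (B : Matrix (Fin N) (Fin N) ℝ) (m0 : ℕ) (t : ℝ) : Matrix (Fin N) (Fin N) ℝ :=
  Matrix.of fun i j => ∫ s in (0:ℝ)..t, (Emat B s * Jmat N m0 * (Emat B s).transpose) i j

end UP

namespace UP

/-! ### Auxiliary lemmas for Statement 16 -/

attribute [local instance] Matrix.linftyOpNormedAddCommGroup Matrix.linftyOpNormedSpace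
  Matrix.linftyOpNormedRing Matrix.linftyOpNormedAlgebra

variable {N : ℕ}

lemma off_succ (m : ℕ → ℕ) (k : ℕ) : off m (k + 1) = off m k + m k :=
  Finset.sum_range_succ m k

lemma off_zero (m : ℕ → ℕ) : off m 0 = 0 := Finset.sum_range_zero m

lemma off_mono (m : ℕ → ℕ) : Monotone (off m) :=
  monotone_nat_of_le_succ fun k => by rw [off_succ]; omega

lemma blockOf_eq (m : ℕ → ℕ) {k i : ℕ} (h1 : off m k ≤ i) (h2 : i < off m (k + 1)) :
    blockOf m i = k := by
  have hmem : k ∈ {j : ℕ | i < off m (j + 1)} := h2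
  refine le_antisymm (Nat.sInf_le hmem) ?_
  by_contra h
  push_neg at h
  have hin : i < off m (blockOf m i + 1) := Nat.sInf_mem (⟨k, hmem⟩ : Set.Nonempty _)
  have hle : off m (blockOf m i + 1) ≤ off m k := off_mono m (by omega)
  omega

lemma block_decomp (m : ℕ → ℕ) (d : ℕ) (hsum : off m (d + 1) = N) {i : ℕ} (hi : i < N) :
    blockOf m i ≤ d ∧ off m (blockOf m i) ≤ i ∧ i < off m (blockOf m i + 1) := by
  have hmem : d ∈ {j : ℕ | i < off m (j + 1)} := by
    simp only [Set.mem_setOf_eq, hsum]; omega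
  have h1 : blockOf m i ≤ d := Nat.sInf_le hmem
  have h2 : i < off m (blockOf m i + 1) := Nat.sInf_mem ⟨d, hmem⟩
  refine ⟨h1, ?_, h2⟩
  rcases Nat.eq_zero_or_pos (blockOf m i) with h0 | h0
  · rw [h0, off_zero]; omega
  · by_contra hlt
    push_neg at hlt
    have hmem2 : blockOf m i - 1 ∈ {j : ℕ | i < off m (j + 1)} := by
      simp only [Set.mem_setOf_eq]
      have he : blockOf m i - 1 + 1 = blockOf m i := by omega
      rw [he]; exact hlt
    have h3 : blockOf m i ≤ blockOf m i - 1 := Nat.sInf_le hmem2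
    omega

def embIdx (m : ℕ → ℕ) (d : ℕ) (hsum : off m (d + 1) = N) (k : ℕ) (hk : k ≤ d)
    (b : Fin (m k)) : Fin N :=
  ⟨off m k + (b : ℕ), by
    have hb := b.2
    have h1 : off m k + (b : ℕ) < off m (k + 1) := by rw [off_succ]; omega
    have h2 : off m (k + 1) ≤ off m (d + 1) := off_mono m (by omega)
    omega⟩

lemma embIdx_injective (m : ℕ → ℕ) (d : ℕ) (hsum : off m (d + 1) = N) (k : ℕ) (hk : k ≤ d) :
    Function.Injective (embIdx m d hsum k hk) := by
  intro a b h
  have := congrArg (fun x : Fin N => (x : ℕ)) h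
  simp only [embIdx] at this
  exact Fin.ext (by omega)

lemma blockOf_embIdx (m : ℕ → ℕ) (d : ℕ) (hsum : off m (d + 1) = N) (k : ℕ) (hk : k ≤ d)
    (b : Fin (m k)) : blockOf m ((embIdx m d hsum k hk b : Fin N) : ℕ) = k := by
  have hb := b.2
  refine blockOf_eq m (by simp [embIdx]) ?_
  simp only [embIdx, off_succ]
  omega

lemma Bext_eq (B : Matrix (Fin N) (Fin N) ℝ) {i j : ℕ} (hi : i < N) (hj : j < N) :
    Bext B i j = B ⟨i, hi⟩ ⟨j, hj⟩ := by
  rw [Bext, dif_pos ⟨hi, hj⟩]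

def superBlock' (B : Matrix (Fin N) (Fin N) ℝ) (m : ℕ → ℕ) (k : ℕ) :
    Matrix (Fin (m k)) (Fin (m (k + 1))) ℝ :=
  Matrix.of fun a b => Bext B (off m k + (a : ℕ)) (off m (k + 1) + (b : ℕ))

lemma superBlock'_eq (B : Matrix (Fin N) (Fin N) ℝ) (m : ℕ → ℕ) (k : ℕ) :
    superBlock' B m k = superBlock B m (k + 1) := rfl

def prodB (B : Matrix (Fin N) (Fin N) ℝ) (m : ℕ → ℕ) : (k : ℕ) → Matrix (Fin (m 0)) (Fin (m k)) ℝ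
  | 0 => 1
  | k + 1 => prodB B m k * superBlock' B m k

lemma prodB_succ (B : Matrix (Fin N) (Fin N) ℝ) (m : ℕ → ℕ) (k : ℕ) :
    prodB B m (k + 1) = prodB B m k * superBlock' B m k := rfl

lemma mulVec_injective_of_rank {p q : ℕ} {A : Matrix (Fin p) (Fin q) ℝ} (h : A.rank = q) :
    Function.Injective A.mulVec := by
  have h1 := LinearMap.finrank_range_add_finrank_ker A.mulVecLin
  rw [Matrix.rank] at h
  have hq : Module.finrank ℝ (Fin q → ℝ) = q := Module.finrank_fin_fun ℝ
  rw [hq, h] at h1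
  have hker : Module.finrank ℝ (LinearMap.ker A.mulVecLin) = 0 := by omega
  have hker0 : LinearMap.ker A.mulVecLin = ⊥ := Submodule.finrank_eq_zero.mp hker
  have hinj := LinearMap.ker_eq_bot.mp hker0
  intro x y hxy
  exact hinj (by simpa using hxy)

lemma prodB_injective (d : ℕ) (m : ℕ → ℕ) (B : Matrix (Fin N) (Fin N) ℝ)
    (hB : IsH2 d m B) : ∀ k, k ≤ d → Function.Injective (prodB B m k).mulVec := by
  intro k
  induction k with
  | zero =>
    intro _ x y hxy
    simpa [prodB, Matrix.one_mulVec] using hxy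
  | succ k ih =>
    intro hk
    have h1 := ih (by omega)
    have h2 : Function.Injective (superBlock' B m k).mulVec := by
      apply mulVec_injective_of_rank
      rw [superBlock'_eq]
      exact hB.2 (k + 1) (by omega) hk
    intro x y hxy
    apply h2
    apply h1
    rw [Matrix.mulVec_mulVec, Matrix.mulVec_mulVec, ← prodB_succ]
    exact hxy

lemma pow_mulVec_block (d : ℕ) (m : ℕ → ℕ) (B : Matrix (Fin N) (Fin N) ℝ)
    (hb : IsBlockForm d m B) (hsum : off m (d + 1) = N) :
    ∀ k (hk : k ≤ d) (x : Fin N → ℝ) (i : Fin (m 0)),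
      ((B ^ k).mulVec x) (embIdx m d hsum 0 (Nat.zero_le d) i)
        = ∑ b : Fin (m k), prodB B m k i b * x (embIdx m d hsum k hk b) := by
  intro k
  induction k with
  | zero =>
    intro hk x i
    simp only [pow_zero, Matrix.one_mulVec, prodB, Matrix.one_apply, ite_mul, zero_mul,
      one_mul, Finset.sum_ite_eq, Finset.mem_univ, if_true]
  | succ k ih =>
    intro hk x i
    have hkd : k ≤ d := by omega
    rw [pow_succ, ← Matrix.mulVec_mulVec]
    rw [ih hkd (B.mulVec x) i]
    have hinner : ∀ b : Fin (m k), (B.mulVec x) (embIdx m d hsum k hkd b)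
        = ∑ c : Fin (m (k + 1)), superBlock' B m k b c * x (embIdx m d hsum (k + 1) hk c) := by
      intro b
      have hrow : ∀ j' : Fin N, blockOf m (j' : ℕ) ≠ k + 1 →
          B (embIdx m d hsum k hkd b) j' = 0 := by
        intro j' hj'
        apply hb.2.2.2
        rw [blockOf_embIdx]
        exact hj'
      have : (B.mulVec x) (embIdx m d hsum k hkd b)
          = ∑ j' ∈ Finset.univ.image (embIdx m d hsum (k + 1) hk),
              B (embIdx m d hsum k hkd b) j' * x j' := by
        rw [Matrix.mulVec, dotProduct]
        refine (Finset.sum_subset (Finset.subset_univ _) ?_).symm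
        intro j' _ hj'
        have hbl : blockOf m (j' : ℕ) ≠ k + 1 := by
          intro hbl
          apply hj'
          rw [Finset.mem_image]
          have hdecomp := block_decomp m d hsum j'.2
          rw [hbl] at hdecomp
          refine ⟨⟨(j' : ℕ) - off m (k + 1), ?_⟩, Finset.mem_univ _, ?_⟩
          · have h4 := hdecomp.2.2
            rw [off_succ (m) (k+1)] at h4
            have := hdecomp.2.1
            omega
          · apply Fin.ext
            simp only [embIdx]
            have := hdecomp.2.1
            omega
        rw [hrow j' hbl, zero_mul]
      rw [this, Finset.sum_image (fun a _ b _ h => embIdx_injective m d hsum (k+1) hk h)]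
      refine Finset.sum_congr rfl fun c _ => ?_
      congr 1
      have hvb : off m k + (b : ℕ) < N := (embIdx m d hsum k hkd b).2
      have hvc : off m (k + 1) + (c : ℕ) < N := (embIdx m d hsum (k + 1) hk c).2
      have hS : superBlock' B m k b c
          = Bext B (off m k + (b : ℕ)) (off m (k + 1) + (c : ℕ)) := rfl
      rw [hS, Bext_eq B hvb hvc]
      rfl
    calc ∑ b : Fin (m k), prodB B m k i b * (B.mulVec x) (embIdx m d hsum k hkd b)
        = ∑ b : Fin (m k), ∑ c : Fin (m (k + 1)),
            prodB B m k i b * (superBlock' B m k b c * x (embIdx m d hsum (k + 1) hk c)) := by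
          refine Finset.sum_congr rfl fun b _ => ?_
          rw [hinner b, Finset.mul_sum]
      _ = ∑ c : Fin (m (k + 1)), (∑ b : Fin (m k), prodB B m k i b * superBlock' B m k b c)
            * x (embIdx m d hsum (k + 1) hk c) := by
          rw [Finset.sum_comm]
          refine Finset.sum_congr rfl fun c _ => ?_
          rw [Finset.sum_mul]
          refine Finset.sum_congr rfl fun b _ => by ring
      _ = ∑ c : Fin (m (k + 1)), prodB B m (k + 1) i c * x (embIdx m d hsum (k + 1) hk c) := by
          refine Finset.sum_congr rfl fun c _ => ?_
          rw [prodB_succ, Matrix.mul_apply]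

lemma kalman (d : ℕ) (m : ℕ → ℕ) (B : Matrix (Fin N) (Fin N) ℝ) (hB : IsH2 d m B)
    (x : Fin N → ℝ)
    (hx : ∀ n : ℕ, ∀ i : Fin N, (i : ℕ) < m 0 → ((B ^ n).mulVec x) i = 0) : x = 0 := by
  have hsum : off m (d + 1) = N := hB.1.2.2.1
  have hzero : ∀ k (hk : k ≤ d) (b : Fin (m k)), x (embIdx m d hsum k hk b) = 0 := by
    intro k hk b
    have h0 : (prodB B m k).mulVec (fun c => x (embIdx m d hsum k hk c)) = 0 := by
      funext i
      have hpow := pow_mulVec_block d m B hB.1 hsum k hk x i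
      have hlt : ((embIdx m d hsum 0 (Nat.zero_le d) i : Fin N) : ℕ) < m 0 := by
        simp only [embIdx, off_zero]
        omega
      have hx' := hx k _ hlt
      rw [hpow] at hx'
      simpa [Matrix.mulVec, dotProduct] using hx'
    have hinj := prodB_injective d m B hB k hk
    have : (fun c => x (embIdx m d hsum k hk c)) = 0 := by
      apply hinj
      rw [h0, Matrix.mulVec_zero]
    exact congrFun this b
  funext j
  obtain ⟨h1, h2, h3⟩ := block_decomp m d hsum j.2
  have hb : (j : ℕ) - off m (blockOf m (j : ℕ)) < m (blockOf m (j : ℕ)) := by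
    rw [off_succ] at h3; omega
  have hj : j = embIdx m d hsum (blockOf m (j : ℕ)) h1
      ⟨(j : ℕ) - off m (blockOf m (j : ℕ)), hb⟩ := by
    apply Fin.ext
    simp only [embIdx]
    omega
  rw [hj]
  exact hzero _ h1 _

/-! ### Analytic lemmas -/

lemma Emat_exp_eq (B : Matrix (Fin N) (Fin N) ℝ) (s : ℝ) :
    Emat B s = NormedSpace.exp (s • (-B.transpose)) := by
  rw [Emat]
  congr 1
  rw [neg_smul, smul_neg]

def entryCLM (i j : Fin N) : Matrix (Fin N) (Fin N) ℝ →L[ℝ] ℝ :=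
  LinearMap.toContinuousLinearMap
    { toFun := fun A => A i j, map_add' := fun _ _ => rfl, map_smul' := fun _ _ => rfl }

lemma entryCLM_apply (i j : Fin N) (A : Matrix (Fin N) (Fin N) ℝ) :
    entryCLM i j A = A i j := rfl

lemma continuous_exp_smul (A : Matrix (Fin N) (Fin N) ℝ) :
    Continuous fun s : ℝ => NormedSpace.exp (s • A) :=
  NormedSpace.exp_continuous.comp (continuous_id.smul continuous_const)

lemma continuous_expEntryMul (A C : Matrix (Fin N) (Fin N) ℝ) (i j : Fin N) :
    Continuous fun s : ℝ => (NormedSpace.exp (s • A) * C) i j :=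
  ((continuous_exp_smul A).matrix_mul continuous_const).matrix_elem i j

lemma hasDerivAt_expEntryMul (A C : Matrix (Fin N) (Fin N) ℝ) (s : ℝ) (i j : Fin N) :
    HasDerivAt (fun u : ℝ => (NormedSpace.exp (u • A) * C) i j)
      ((NormedSpace.exp (s • A) * (A * C)) i j) s := by
  have h : HasDerivAt (fun u : ℝ => NormedSpace.exp (u • A))
      (NormedSpace.exp (s • A) * A) s := hasDerivAt_exp_smul_const A s
  have h2 : HasDerivAt (fun u : ℝ => NormedSpace.exp (u • A) * C)
      (NormedSpace.exp (s • A) * A * C) s := h.mul_const C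
  have hL := ((entryCLM i j).hasFDerivAt.comp_hasDerivAt s h2)
  have e : entryCLM i j (NormedSpace.exp (s • A) * A * C)
      = (NormedSpace.exp (s • A) * (A * C)) i j := by rw [entryCLM_apply, mul_assoc]
  exact hL.congr_deriv e

lemma transpose_mulVec_apply (M : Matrix (Fin N) (Fin N) ℝ) (x : Fin N → ℝ) (i : Fin N) :
    M.transpose.mulVec x i = ∑ j : Fin N, M j i * x j := by
  simp [Matrix.mulVec, dotProduct, Matrix.transpose_apply]

lemma continuous_w (A C : Matrix (Fin N) (Fin N) ℝ) (x : Fin N → ℝ) (i : Fin N) :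
    Continuous fun s : ℝ => ((NormedSpace.exp (s • A) * C).transpose.mulVec x) i := by
  simp only [transpose_mulVec_apply]
  exact continuous_finset_sum _ fun j _ => (continuous_expEntryMul A C j i).mul continuous_const

lemma obs_vanish (A : Matrix (Fin N) (Fin N) ℝ) (m0 : ℕ) (x : Fin N → ℝ) (t : ℝ) (ht : 0 < t)
    (h0 : ∀ s ∈ Set.Icc (0:ℝ) t, ∀ i : Fin N, (i : ℕ) < m0 →
      ((NormedSpace.exp (s • A)).transpose.mulVec x) i = 0) :
    ∀ n : ℕ, ∀ i : Fin N, (i : ℕ) < m0 → (((A ^ n).transpose).mulVec x) i = 0 := by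
  have key : ∀ n : ℕ, ∀ s ∈ Set.Icc (0:ℝ) t, ∀ i : Fin N, (i : ℕ) < m0 →
      ((NormedSpace.exp (s • A) * A ^ n).transpose.mulVec x) i = 0 := by
    intro n
    induction n with
    | zero => simpa [pow_zero, mul_one] using h0
    | succ n ih =>
      have hIoo : ∀ s ∈ Set.Ioo (0:ℝ) t, ∀ i : Fin N, (i : ℕ) < m0 →
          ((NormedSpace.exp (s • A) * A ^ (n + 1)).transpose.mulVec x) i = 0 := by
        intro s hs i him
        have hd : HasDerivAt
            (fun u : ℝ => ((NormedSpace.exp (u • A) * A ^ n).transpose.mulVec x) i)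
            (((NormedSpace.exp (s • A) * A ^ (n + 1)).transpose.mulVec x) i) s := by
          simp only [transpose_mulVec_apply]
          have hterm : ∀ j : Fin N, HasDerivAt
              (fun u : ℝ => (NormedSpace.exp (u • A) * A ^ n) j i * x j)
              ((NormedSpace.exp (s • A) * A ^ (n + 1)) j i * x j) s := by
            intro j
            have := (hasDerivAt_expEntryMul A (A ^ n) s j i).mul_const (x j)
            rwa [← pow_succ'] at this
          exact HasDerivAt.fun_sum fun j _ => hterm j
        have hev : (fun u : ℝ => ((NormedSpace.exp (u • A) * A ^ n).transpose.mulVec x) i)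
            =ᶠ[nhds s] fun _ => (0:ℝ) := by
          filter_upwards [Ioo_mem_nhds hs.1 hs.2] with u hu
          exact ih u (Set.Ioo_subset_Icc_self hu) i him
        have hd0 : HasDerivAt (fun _ : ℝ => (0:ℝ))
            (((NormedSpace.exp (s • A) * A ^ (n + 1)).transpose.mulVec x) i) s :=
          hd.congr_of_eventuallyEq hev.symm
        exact (hd0.unique (hasDerivAt_const s 0)).symm ▸ rfl
      intro s hs i him
      have hcont : Continuous fun u : ℝ =>
          ((NormedSpace.exp (u • A) * A ^ (n + 1)).transpose.mulVec x) i :=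
        continuous_w A (A ^ (n + 1)) x i
      have heq : Set.EqOn (fun u : ℝ =>
          ((NormedSpace.exp (u • A) * A ^ (n + 1)).transpose.mulVec x) i) 0 (Set.Ioo 0 t) :=
        fun u hu => hIoo u hu i him
      have hcl := heq.closure hcont continuous_const
      rw [closure_Ioo ht.ne] at hcl
      exact hcl hs
  intro n i him
  have := key n 0 (Set.left_mem_Icc.mpr ht.le) i him
  simpa [zero_smul, NormedSpace.exp_zero, one_mul] using this

end UP

namespace UP

attribute [local instance] Matrix.linftyOpNormedAddCommGroup Matrix.linftyOpNormedSpace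
  Matrix.linftyOpNormedRing Matrix.linftyOpNormedAlgebra

open scoped Matrix

/-- Kalman condition: under (H2) (including the rank conditions),
the covariance matrix `C(t) = ∫₀ᵗ E(s)·J·E(s)ᵀ ds` is positive definite for every
`t > 0`; in particular it is invertible. -/
theorem covariance_posDef (N d : ℕ) (m : ℕ → ℕ) (B : Matrix (Fin N) (Fin N) ℝ)
    (hB : IsH2 d m B) (t : ℝ) (ht : 0 < t) :
    (Cmat B (m 0) t).PosDef ∧ IsUnit (Cmat B (m 0) t).det := by
  set m0 := m 0 with hm0
  -- symmetry of the integrand and of `Cmat`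
  have hJT : (Jmat N m0).transpose = Jmat N m0 := by
    ext a b
    simp only [Matrix.transpose_apply, Jmat, Matrix.of_apply]
    by_cases h : a = b
    · subst h; rfl
    · rw [if_neg (fun hc => h (hc.2.symm)), if_neg (fun hc => h hc.2)]
  have hsymM : ∀ s : ℝ, (Emat B s * Jmat N m0 * (Emat B s).transpose).transpose
      = Emat B s * Jmat N m0 * (Emat B s).transpose := by
    intro s
    rw [Matrix.transpose_mul, Matrix.transpose_mul, Matrix.transpose_transpose, hJT,
      Matrix.mul_assoc]
  have hherm : (Cmat B m0 t).IsHermitian := by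
    show (Cmat B m0 t).conjTranspose = Cmat B m0 t
    ext i j
    simp only [Matrix.conjTranspose_apply, Cmat, Matrix.of_apply, star_trivial]
    refine intervalIntegral.integral_congr fun s _ => ?_
    exact congrFun (congrFun (hsymM s) i) j
  -- continuity of the entries of the integrand
  have hEcont : Continuous fun s : ℝ => Emat B s := by
    simp only [Emat_exp_eq]
    exact continuous_exp_smul (-B.transpose)
  have hcontEnt : ∀ i j : Fin N,
      Continuous fun s : ℝ => (Emat B s * Jmat N m0 * (Emat B s).transpose) i j := by
    intro i j
    exact ((hEcont.matrix_mul continuous_const).matrix_mul hEcont.matrix_transpose).matrix_elem i j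
  -- the key positivity statement
  have hpos : ∀ x : Fin N → ℝ, x ≠ 0 → 0 < x ⬝ᵥ (Cmat B m0 t).mulVec x := by
    intro x hx
    -- the scalar integrand
    set h : ℝ → ℝ := fun s => ∑ i : Fin N, (if (i : ℕ) < m0 then
      ((Emat B s).transpose.mulVec x) i * ((Emat B s).transpose.mulVec x) i else 0) with hh
    have hwcont : ∀ i : Fin N, Continuous fun s : ℝ => ((Emat B s).transpose.mulVec x) i := by
      intro i
      simp only [transpose_mulVec_apply]
      exact continuous_finset_sum _ fun j _ => (hEcont.matrix_elem j i).mul continuous_const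
    have hcont_h : Continuous h := by
      rw [hh]
      refine continuous_finset_sum _ fun i _ => ?_
      by_cases hi : (i : ℕ) < m0
      · simpa [hi, Pi.mul_def] using (hwcont i).mul (hwcont i)
      · simpa [hi] using continuous_const
    have hnn : ∀ s : ℝ, 0 ≤ h s := by
      intro s
      refine Finset.sum_nonneg fun i _ => ?_
      by_cases hi : (i : ℕ) < m0
      · rw [if_pos hi]; exact mul_self_nonneg _
      · rw [if_neg hi]
    -- pointwise identity for the quadratic form of the integrand
    have hpt : ∀ s : ℝ,
        x ⬝ᵥ ((Emat B s * Jmat N m0 * (Emat B s).transpose).mulVec x) = h s := by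
      intro s
      set w : Fin N → ℝ := (Emat B s).transpose.mulVec x with hw
      have h1 : (Emat B s * Jmat N m0 * (Emat B s).transpose).mulVec x
          = (Emat B s).mulVec ((Jmat N m0).mulVec w) := by
        rw [← Matrix.mulVec_mulVec, ← Matrix.mulVec_mulVec]
      rw [h1, Matrix.dotProduct_mulVec, ← Matrix.mulVec_transpose, ← hw]
      have hJ : ∀ i : Fin N, (Jmat N m0).mulVec w i = if (i : ℕ) < m0 then w i else 0 := by
        intro i
        by_cases hi : (i : ℕ) < m0
        · simp only [Matrix.mulVec, dotProduct, Jmat, Matrix.of_apply, hi, true_and,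
            if_pos hi]
          rw [Finset.sum_eq_single i]
          · simp
          · intro b _ hb
            rw [if_neg (fun hc => hb hc.symm), zero_mul]
          · intro hcon
            exact absurd (Finset.mem_univ i) hcon
        · simp [Matrix.mulVec, dotProduct, Jmat, hi]
      rw [hh, dotProduct]
      refine Finset.sum_congr rfl fun i _ => ?_
      rw [hJ i]
      by_cases hi : (i : ℕ) < m0 <;> simp [hi, hw]
    -- quadratic form as an integral
    have hInt : ∀ i j : Fin N, IntervalIntegrable
        (fun s => x i * ((Emat B s * Jmat N m0 * (Emat B s).transpose) i j * x j))
        MeasureTheory.volume 0 t :=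
      fun i j => (continuous_const.mul ((hcontEnt i j).mul continuous_const)).intervalIntegrable 0 t
    have hterm : ∀ i j : Fin N, x i * (Cmat B m0 t i j * x j)
        = ∫ s in (0:ℝ)..t,
            x i * ((Emat B s * Jmat N m0 * (Emat B s).transpose) i j * x j) := by
      intro i j
      rw [show Cmat B m0 t i j
        = ∫ s in (0:ℝ)..t, (Emat B s * Jmat N m0 * (Emat B s).transpose) i j from rfl]
      rw [← intervalIntegral.integral_mul_const, ← intervalIntegral.integral_const_mul]
    have hrep : x ⬝ᵥ (Cmat B m0 t).mulVec x = ∫ s in (0:ℝ)..t, h s := by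
      have hps : ∀ s : ℝ, x ⬝ᵥ ((Emat B s * Jmat N m0 * (Emat B s).transpose).mulVec x)
          = ∑ i : Fin N, ∑ j : Fin N,
              x i * ((Emat B s * Jmat N m0 * (Emat B s).transpose) i j * x j) := by
        intro s
        simp [dotProduct, Matrix.mulVec, Finset.mul_sum]
      calc x ⬝ᵥ (Cmat B m0 t).mulVec x
          = ∑ i : Fin N, ∑ j : Fin N, x i * (Cmat B m0 t i j * x j) := by
            simp [dotProduct, Matrix.mulVec, Finset.mul_sum]
        _ = ∑ i : Fin N, ∑ j : Fin N, ∫ s in (0:ℝ)..t,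
              x i * ((Emat B s * Jmat N m0 * (Emat B s).transpose) i j * x j) :=
            Finset.sum_congr rfl fun i _ => Finset.sum_congr rfl fun j _ => hterm i j
        _ = ∑ i : Fin N, ∫ s in (0:ℝ)..t, ∑ j : Fin N,
              x i * ((Emat B s * Jmat N m0 * (Emat B s).transpose) i j * x j) :=
            Finset.sum_congr rfl fun i _ =>
              (intervalIntegral.integral_finset_sum fun j _ => hInt i j).symm
        _ = ∫ s in (0:ℝ)..t, ∑ i : Fin N, ∑ j : Fin N,
              x i * ((Emat B s * Jmat N m0 * (Emat B s).transpose) i j * x j) :=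
            (intervalIntegral.integral_finset_sum fun i _ =>
              (by exact (continuous_finset_sum _ fun j _ =>
                continuous_const.mul ((hcontEnt i j).mul continuous_const)).intervalIntegrable 0 t)).symm
        _ = ∫ s in (0:ℝ)..t, h s :=
            intervalIntegral.integral_congr fun s _ => by rw [← hps s, hpt s]
    -- nonnegativity of the quadratic form
    have hge : 0 ≤ x ⬝ᵥ (Cmat B m0 t).mulVec x := by
      rw [hrep]
      exact intervalIntegral.integral_nonneg ht.le fun s _ => hnn s
    rcases lt_or_eq_of_le hge with hlt | heq
    · exact hlt
    exfalso
    -- the integral vanishes, hence `h = 0` on `[0, t]`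
    have hq0 : ∫ s in (0:ℝ)..t, h s = 0 := by rw [← hrep, ← heq]
    have hae : h =ᵐ[MeasureTheory.volume.restrict (Set.Ioc 0 t)] 0 :=
      (intervalIntegral.integral_eq_zero_iff_of_le_of_nonneg_ae ht.le
        (Filter.Eventually.of_forall fun s => hnn s) (hcont_h.intervalIntegrable 0 t)).mp hq0
    have hopen : IsOpen {u : ℝ | h u ≠ 0} :=
      isOpen_compl_iff.mpr (isClosed_eq hcont_h continuous_const)
    have hmeas0 : MeasureTheory.volume ({u : ℝ | h u ≠ 0} ∩ Set.Ioc 0 t) = 0 := by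
      have h1 := MeasureTheory.ae_iff.mp hae
      simp only [Pi.zero_apply] at h1
      rw [MeasureTheory.Measure.restrict_apply (by exact hopen.measurableSet)] at h1
      exact h1
    have hIoo : ∀ s ∈ Set.Ioo (0:ℝ) t, h s = 0 := by
      intro s hs
      by_contra hne
      have hp : 0 < MeasureTheory.volume ({u : ℝ | h u ≠ 0} ∩ Set.Ioo 0 t) :=
        (hopen.inter isOpen_Ioo).measure_pos _ ⟨s, hne, hs⟩
      have hsub : {u : ℝ | h u ≠ 0} ∩ Set.Ioo 0 t ⊆ {u : ℝ | h u ≠ 0} ∩ Set.Ioc 0 t :=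
        Set.inter_subset_inter_right _ Set.Ioo_subset_Ioc_self
      exact hp.ne' (le_antisymm (hmeas0 ▸ MeasureTheory.measure_mono hsub) (by simp))
    have hIcc : ∀ s ∈ Set.Icc (0:ℝ) t, h s = 0 := by
      have heqon : Set.EqOn h 0 (Set.Ioo 0 t) := fun u hu => hIoo u hu
      have hcl := heqon.closure hcont_h continuous_const
      rw [closure_Ioo ht.ne] at hcl
      exact fun s hs => hcl hs
    -- hence the observations vanish on `[0, t]`
    have hw0 : ∀ s ∈ Set.Icc (0:ℝ) t, ∀ i : Fin N, (i : ℕ) < m0 →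
        ((Emat B s).transpose.mulVec x) i = 0 := by
      intro s hs i hi
      have hsum0 := hIcc s hs
      rw [hh] at hsum0
      have hterm0 := (Finset.sum_eq_zero_iff_of_nonneg (fun i _ => by
        by_cases hi' : (i : ℕ) < m0
        · rw [if_pos hi']; exact mul_self_nonneg _
        · rw [if_neg hi'])).mp hsum0 i (Finset.mem_univ i)
      rw [if_pos hi] at hterm0
      exact mul_self_eq_zero.mp hterm0
    -- Kalman: all iterated observations vanish, so `x = 0`
    have hw0' : ∀ s ∈ Set.Icc (0:ℝ) t, ∀ i : Fin N, (i : ℕ) < m0 →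
        ((NormedSpace.exp (s • (-B.transpose))).transpose.mulVec x) i = 0 := by
      intro s hs i hi
      have := hw0 s hs i hi
      rwa [Emat_exp_eq] at this
    have hobs := obs_vanish (-B.transpose) m0 x t ht hw0'
    have hBn : ∀ n : ℕ, ∀ i : Fin N, (i : ℕ) < m 0 → ((B ^ n).mulVec x) i = 0 := by
      intro n i hi
      have h1 := hobs n i hi
      have hAn : ((-B.transpose) ^ n).transpose = ((-1 : ℝ) ^ n) • (B ^ n) := by
        rw [show -B.transpose = ((-1 : ℝ)) • B.transpose from by rw [neg_one_smul]]
        rw [smul_pow, Matrix.transpose_smul, Matrix.transpose_pow, Matrix.transpose_transpose]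
      rw [hAn, Matrix.smul_mulVec, Pi.smul_apply, smul_eq_mul] at h1
      rcases mul_eq_zero.mp h1 with hc | hval
      · exact absurd hc (pow_ne_zero n (by norm_num))
      · exact hval
    exact hx (kalman d m B hB x hBn)
  have hPD : (Cmat B m0 t).PosDef := by
    refine Matrix.posDef_iff_dotProduct_mulVec.mpr ⟨hherm, fun x hx => ?_⟩
    have hsx : star x = x := funext fun i => star_trivial (x i)
    rw [hsx]
    exact hpos x hx
  exact ⟨hPD, hPD.det_pos.ne'.isUnit⟩

end UP
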